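/- Expectation of T₁ under homoscedasticity: let X be an n×p real matrix of full column rank p < n, let P := I_n − X(XᵀX)⁻¹Xᵀ, and let ε₁,…,εₙ be i.i.d. real random variables with distribution symmetric about 0, E ε₁² = 1 and M₄ := E ε₁⁴ < ∞. With residuals ε̂ := Pε, E[ Σ_{i=1}^n ε̂ᵢ⁴ ] = 3·tr(P∘P) + ν₄·tr((P∘P)²), where ν₄ := M₄ − 3. -/

import Mathlib

open MeasureTheory ProbabilityTheory Matrix
open scoped Matrix

/-!
Since `P` is symmetric and idempotent, `∑ⱼ Pᵢⱼ² = Pᵢᵢ`. Each residual `ε̂ᵢ = ∑ⱼ Pᵢⱼ εⱼ` is a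
weighted sum of independent variables with vanishing first and third moments, so adding one
summand `Y` at a time to the independent partial sum `S` gives
`E(S + Y)⁴ = ES⁴ + 6 ES² EY² + EY⁴`, and by induction
`E(∑ⱼ aⱼ εⱼ)⁴ = 3 (∑ⱼ aⱼ²)² + ν₄ ∑ⱼ aⱼ⁴`. With `aⱼ = Pᵢⱼ` and summing over `i` this is
`3 ∑ᵢ Pᵢᵢ² + ν₄ ∑ᵢⱼ Pᵢⱼ⁴ = 3 tr(P∘P) + ν₄ tr((P∘P)²)`.
-/

namespace Matrix

variable {m n R : Type*} [Fintype m] [Fintype n]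

theorem isUnit_of_rank_eq_card [DecidableEq n] [Field R] {A : Matrix n n R}
    (h : A.rank = Fintype.card n) : IsUnit A :=
  mulVec_surjective_iff_isUnit.mp <| LinearMap.range_eq_top (f := A.mulVecLin).mp <|
    Submodule.eq_top_of_finrank_eq (by rw [Module.finrank_fintype_fun_eq_card]; exact h)

theorem isUnit_transpose_mul_self_of_rank_eq_card [DecidableEq n] {X : Matrix m n ℝ}
    (h : X.rank = Fintype.card n) : IsUnit (Xᵀ * X) :=
  isUnit_of_rank_eq_card (by rw [rank_transpose_mul_self, h])

theorem isSymm_one_sub_mul_inv_mul_transpose [DecidableEq m] [DecidableEq n] [CommRing R]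
    (X : Matrix m n R) : (1 - X * (Xᵀ * X)⁻¹ * Xᵀ).IsSymm := by
  refine isSymm_one.sub ?_
  simp only [IsSymm, transpose_mul, transpose_transpose, transpose_nonsing_inv, Matrix.mul_assoc]

theorem isIdempotentElem_one_sub_mul_inv_mul_transpose [DecidableEq m] [DecidableEq n]
    [CommRing R] {X : Matrix m n R} (h : IsUnit (Xᵀ * X)) :
    IsIdempotentElem (1 - X * (Xᵀ * X)⁻¹ * Xᵀ) := by
  refine IsIdempotentElem.one_sub_iff.mpr ?_
  calc X * (Xᵀ * X)⁻¹ * Xᵀ * (X * (Xᵀ * X)⁻¹ * Xᵀ)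
      = X * ((Xᵀ * X)⁻¹ * (Xᵀ * X)) * (Xᵀ * X)⁻¹ * Xᵀ := by simp only [Matrix.mul_assoc]
    _ = X * (Xᵀ * X)⁻¹ * Xᵀ := by
      rw [nonsing_inv_mul _ ((isUnit_iff_isUnit_det _).mp h), Matrix.mul_one]

theorem sum_apply_sq_eq_diag [DecidableEq n] [CommSemiring R] {P : Matrix n n R}
    (hsymm : P.IsSymm) (hidem : IsIdempotentElem P) (i : n) : ∑ j, P i j ^ 2 = P i i := by
  conv_rhs => rw [← hidem.eq, mul_apply]
  simp_rw [hsymm.apply, sq]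

theorem trace_hadamard_self [CommSemiring R] (P : Matrix n n R) :
    (P ⊙ P).trace = ∑ i, P i i ^ 2 := by
  simp [trace, sq]

theorem IsSymm.trace_hadamard_self_mul_hadamard_self [CommSemiring R] {P : Matrix n n R}
    (hsymm : P.IsSymm) : (P ⊙ P * (P ⊙ P)).trace = ∑ i, ∑ j, P i j ^ 4 := by
  simp only [trace, diag, mul_apply, hadamard_apply, hsymm.apply]
  exact Fintype.sum_congr _ _ fun i => Fintype.sum_congr _ _ fun j => by ring

end Matrix

section Moments

variable {Ω : Type*} [MeasurableSpace Ω] {μ : Measure Ω}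

theorem integral_pow_eq_zero_of_map_neg {X : Ω → ℝ} (hX : Measurable X)
    (hsymm : μ.map X = μ.map (fun ω => -X ω)) {k : ℕ} (hk : Odd k) :
    ∫ ω, X ω ^ k ∂μ = 0 := by
  have hpow : AEStronglyMeasurable (fun x : ℝ => x ^ k) (μ.map X) :=
    (measurable_id.pow_const k).aestronglyMeasurable
  have hflip : ∫ ω, X ω ^ k ∂μ = ∫ ω, (-X ω) ^ k ∂μ := by
    rw [← integral_map hX.aemeasurable hpow, hsymm,
      integral_map (φ := fun ω => -X ω) hX.neg.aemeasurable (hsymm ▸ hpow)]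
  simp_rw [hk.neg_pow, integral_neg] at hflip
  linarith

theorem memLp_four_of_integrable_pow_four {X : Ω → ℝ} (hX : AEStronglyMeasurable X μ)
    (hint : Integrable (fun ω => X ω ^ 4) μ) : MemLp X 4 μ := by
  rw [← integrable_norm_rpow_iff hX (by norm_num) (by norm_num)]
  convert hint using 2 with ω
  rw [show ((4 : ENNReal).toReal) = ((4 : ℕ) : ℝ) by norm_num, Real.rpow_natCast,
    Real.norm_eq_abs, pow_abs, abs_of_nonneg (by positivity)]

theorem MeasureTheory.MemLp.integrable_pow_of_le [IsFiniteMeasure μ] {X : Ω → ℝ} {p k : ℕ}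
    (hX : MemLp X p μ) (hk : k ≤ p) : Integrable (fun ω => X ω ^ k) μ :=
  (hX.mono_exponent (by exact_mod_cast hk)).integrable_norm_pow'.mono'
    (hX.aestronglyMeasurable.pow k) (.of_forall fun ω => by rw [norm_pow])

end Moments

namespace ProbabilityTheory

variable {Ω : Type*} [MeasurableSpace Ω] {μ : Measure Ω}

theorem IndepFun.integral_add_pow [IsFiniteMeasure μ] {S Y : Ω → ℝ} (hind : IndepFun S Y μ)
    {N : ℕ} (hS : MemLp S N μ) (hY : MemLp Y N μ) :
    ∫ ω, (S ω + Y ω) ^ N ∂μ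
      = ∑ k ∈ Finset.range (N + 1),
          (∫ ω, S ω ^ k ∂μ) * (∫ ω, Y ω ^ (N - k) ∂μ) * N.choose k := by
  have hindpow (k : ℕ) : IndepFun (fun ω => S ω ^ k) (fun ω => Y ω ^ (N - k)) μ :=
    hind.comp (measurable_id.pow_const k) (measurable_id.pow_const (N - k))
  have hint : ∀ k ∈ Finset.range (N + 1),
      Integrable (fun ω => S ω ^ k * Y ω ^ (N - k) * N.choose k) μ := fun k hk =>
    ((hindpow k).integrable_mul (hS.integrable_pow_of_le (Finset.mem_range_succ_iff.mp hk))
      (hY.integrable_pow_of_le (N.sub_le k))).mul_const _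
  simp_rw [add_pow]
  rw [integral_finsetSum _ hint]
  refine Finset.sum_congr rfl fun k _ => ?_
  rw [integral_mul_const, (hindpow k).integral_fun_mul_eq_mul_integral
    (hS.aestronglyMeasurable.pow k) (hY.aestronglyMeasurable.pow _)]

variable {ι : Type*} {ε : ι → Ω → ℝ}

theorem iIndepFun.indepFun_sum_mul_of_notMem (hind : iIndepFun ε μ)
    (hmeas : ∀ i, Measurable (ε i)) (a : ι → ℝ) {s : Finset ι} {b : ι} (hb : b ∉ s) :
    IndepFun (fun ω => ∑ j ∈ s, a j * ε j ω) (fun ω => a b * ε b ω) μ := by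
  have := (hind.comp (fun j x => a j * x) fun j => measurable_const_mul (a j))
    |>.indepFun_finsetSum_of_notMem (fun j => (hmeas j).const_mul (a j)) hb
  simpa only [Finset.sum_fn, Function.comp_def] using this

variable [IsProbabilityMeasure μ]

theorem IndepFun.integral_add_sq {S Y : Ω → ℝ} (hind : IndepFun S Y μ) (hS : MemLp S 2 μ)
    (hY : MemLp Y 2 μ) (hY1 : ∫ ω, Y ω ∂μ = 0) :
    ∫ ω, (S ω + Y ω) ^ 2 ∂μ = ∫ ω, S ω ^ 2 ∂μ + ∫ ω, Y ω ^ 2 ∂μ := by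
  rw [hind.integral_add_pow (N := 2) (by exact_mod_cast hS) (by exact_mod_cast hY)]
  simp [Finset.sum_range_succ, hY1, add_comm]

theorem IndepFun.integral_add_pow_four {S Y : Ω → ℝ} (hind : IndepFun S Y μ)
    (hS : MemLp S 4 μ) (hY : MemLp Y 4 μ) (hY1 : ∫ ω, Y ω ∂μ = 0)
    (hY3 : ∫ ω, Y ω ^ 3 ∂μ = 0) :
    ∫ ω, (S ω + Y ω) ^ 4 ∂μ
      = ∫ ω, S ω ^ 4 ∂μ + 6 * (∫ ω, S ω ^ 2 ∂μ) * ∫ ω, Y ω ^ 2 ∂μ + ∫ ω, Y ω ^ 4 ∂μ := by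
  rw [hind.integral_add_pow (N := 4) (by exact_mod_cast hS) (by exact_mod_cast hY)]
  simp only [Finset.sum_range_succ, Finset.sum_range_zero, pow_zero, integral_const,
    probReal_univ, smul_eq_mul, mul_one, tsub_zero, one_mul, Nat.choose, Nat.cast_one, zero_add,
    pow_one, Nat.add_one_sub_one, hY3, mul_zero, add_zero, Nat.reduceAdd, Nat.cast_ofNat,
    zero_mul, Nat.reduceSub, hY1, tsub_self]
  ring

theorem iIndepFun.integral_sum_mul_sq (hind : iIndepFun ε μ) (hmeas : ∀ i, Measurable (ε i))
    (hL : ∀ i, MemLp (ε i) 2 μ) (h1 : ∀ i, ∫ ω, ε i ω ∂μ = 0)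
    (h2 : ∀ i, ∫ ω, ε i ω ^ 2 ∂μ = 1) (a : ι → ℝ) (s : Finset ι) :
    ∫ ω, (∑ j ∈ s, a j * ε j ω) ^ 2 ∂μ = ∑ j ∈ s, a j ^ 2 := by
  classical
  induction s using Finset.induction_on with
  | empty => simp
  | insert b s hb ih =>
    simp_rw [Finset.sum_insert hb, add_comm (a b * _)]
    rw [(hind.indepFun_sum_mul_of_notMem hmeas a hb).integral_add_sq
      (memLp_finsetSum _ fun j _ => (hL j).const_mul (a j)) ((hL b).const_mul (a b))
      (by rw [integral_const_mul, h1, mul_zero]), ih]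
    simp_rw [mul_pow, integral_const_mul, h2, mul_one, add_comm]

theorem iIndepFun.integral_sum_mul_pow_four (hind : iIndepFun ε μ)
    (hmeas : ∀ i, Measurable (ε i)) (hL : ∀ i, MemLp (ε i) 4 μ) (h1 : ∀ i, ∫ ω, ε i ω ∂μ = 0)
    (h2 : ∀ i, ∫ ω, ε i ω ^ 2 ∂μ = 1) (h3 : ∀ i, ∫ ω, ε i ω ^ 3 ∂μ = 0) {M₄ : ℝ}
    (h4 : ∀ i, ∫ ω, ε i ω ^ 4 ∂μ = M₄) (a : ι → ℝ) (s : Finset ι) :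
    ∫ ω, (∑ j ∈ s, a j * ε j ω) ^ 4 ∂μ
      = 3 * (∑ j ∈ s, a j ^ 2) ^ 2 + (M₄ - 3) * ∑ j ∈ s, a j ^ 4 := by
  classical
  induction s using Finset.induction_on with
  | empty => simp
  | insert b s hb ih =>
    simp_rw [Finset.sum_insert hb, add_comm (a b * _)]
    rw [(hind.indepFun_sum_mul_of_notMem hmeas a hb).integral_add_pow_four
      (memLp_finsetSum _ fun j _ => (hL j).const_mul (a j)) ((hL b).const_mul (a b))
      (by rw [integral_const_mul, h1, mul_zero])
      (by simp_rw [mul_pow, integral_const_mul, h3, mul_zero]),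
      ih, hind.integral_sum_mul_sq hmeas (fun i => (hL i).mono_exponent (by norm_num)) h1 h2]
    simp_rw [mul_pow, integral_const_mul, h2, h4]
    ring

end ProbabilityTheory

theorem expectation_T1_homoscedastic_general
    {Ω : Type*} [MeasurableSpace Ω] (μ : Measure Ω) [IsProbabilityMeasure μ]
    {n p : ℕ}
    (X : Matrix (Fin n) (Fin p) ℝ) (hrank : X.rank = p)
    (P : Matrix (Fin n) (Fin n) ℝ) (hP : P = 1 - X * (Xᵀ * X)⁻¹ * Xᵀ)
    (ε : Fin n → Ω → ℝ)
    (hmeas : ∀ i, Measurable (ε i))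
    (hindep : iIndepFun ε μ)
    (hsymm : ∀ i, μ.map (ε i) = μ.map (fun ω => -ε i ω))
    (hvar : ∀ i, ∫ ω, (ε i ω) ^ 2 ∂μ = 1)
    (hint4 : ∀ i, Integrable (fun ω => (ε i ω) ^ 4) μ)
    (M4 ν4 : ℝ)
    (hM4 : ∀ i, ∫ ω, (ε i ω) ^ 4 ∂μ = M4)
    (hν4 : ν4 = M4 - 3)
    (εhat : Fin n → Ω → ℝ)
    (hεhat : ∀ i ω, εhat i ω = ∑ j, P i j * ε j ω) :
    (∫ ω, (∑ i, εhat i ω ^ 4) ∂μ)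
      = 3 * (P ⊙ P).trace + ν4 * ((P ⊙ P) * (P ⊙ P)).trace := by
  obtain rfl : εhat = fun i ω => ∑ j, P i j * ε j ω := funext fun i => funext (hεhat i)
  have hXtX : IsUnit (Xᵀ * X) :=
    isUnit_transpose_mul_self_of_rank_eq_card (by rw [hrank, Fintype.card_fin])
  have hPsymm : P.IsSymm := hP ▸ isSymm_one_sub_mul_inv_mul_transpose X
  have hPidem : IsIdempotentElem P := hP ▸ isIdempotentElem_one_sub_mul_inv_mul_transpose hXtX
  have hL (i : Fin n) : MemLp (ε i) 4 μ :=
    memLp_four_of_integrable_pow_four (hmeas i).aestronglyMeasurable (hint4 i)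
  have hodd (i : Fin n) {k : ℕ} (hk : Odd k) : ∫ ω, ε i ω ^ k ∂μ = 0 :=
    integral_pow_eq_zero_of_map_neg (hmeas i) (hsymm i) hk
  have hrow (i : Fin n) :
      ∫ ω, (∑ j, P i j * ε j ω) ^ 4 ∂μ = 3 * P i i ^ 2 + ν4 * ∑ j, P i j ^ 4 := by
    rw [hν4, ← sum_apply_sq_eq_diag hPsymm hPidem i]
    exact hindep.integral_sum_mul_pow_four hmeas hL (fun i => by simpa using hodd i odd_one)
      hvar (fun i => hodd i (by decide)) hM4 _ _
  have hint (i : Fin n) : Integrable (fun ω => (∑ j, P i j * ε j ω) ^ 4) μ :=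
    (memLp_finsetSum _ fun j _ => (hL j).const_mul (P i j)).integrable_pow_of_le le_rfl
  rw [integral_finsetSum _ fun i _ => hint i]
  simp_rw [hrow, Finset.sum_add_distrib, ← Finset.mul_sum, trace_hadamard_self,
    hPsymm.trace_hadamard_self_mul_hadamard_self]

/-- Expectation of `T₁ = Σᵢ ε̂ᵢ⁴` under homoscedasticity: with `P = I − X(XᵀX)⁻¹Xᵀ` the hat
matrix of a full-column-rank design `X` and residuals `ε̂ = Pε`,
`E[Σᵢ ε̂ᵢ⁴] = 3·tr(P∘P) + ν₄·tr((P∘P)²)` where `ν₄ = M₄ − 3`. -/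
theorem expectation_T1_homoscedastic
    {Ω : Type*} [MeasurableSpace Ω] (μ : Measure Ω) [IsProbabilityMeasure μ]
    {n p : ℕ} (hpn : p < n)
    (X : Matrix (Fin n) (Fin p) ℝ) (hrank : X.rank = p)
    (P : Matrix (Fin n) (Fin n) ℝ) (hP : P = 1 - X * (Xᵀ * X)⁻¹ * Xᵀ)
    (ε : Fin n → Ω → ℝ)
    (hmeas : ∀ i, Measurable (ε i))
    (hindep : iIndepFun ε μ)
    (hident : ∀ i j, μ.map (ε i) = μ.map (ε j))
    (hsymm : ∀ i, μ.map (ε i) = μ.map (fun ω => -ε i ω))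
    (hvar : ∀ i, ∫ ω, (ε i ω) ^ 2 ∂μ = 1)
    (hint4 : ∀ i, Integrable (fun ω => (ε i ω) ^ 4) μ)
    (M4 ν4 : ℝ)
    (hM4 : ∀ i, ∫ ω, (ε i ω) ^ 4 ∂μ = M4)
    (hν4 : ν4 = M4 - 3)
    (εhat : Fin n → Ω → ℝ)
    (hεhat : ∀ i ω, εhat i ω = ∑ j, P i j * ε j ω) :
    (∫ ω, (∑ i, εhat i ω ^ 4) ∂μ)
      = 3 * (P ⊙ P).trace + ν4 * ((P ⊙ P) * (P ⊙ P)).trace :=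
  expectation_T1_homoscedastic_general μ X hrank P hP ε hmeas hindep hsymm hvar hint4 M4 ν4 hM4 hν4
    εhat hεhat
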